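/- For all complex a, b with b not a nonpositive integer, and all complex z, Kummer's confluent hypergeometric function satisfies the Kummer transformation ₁F₁(a,b,z) = e^z · ₁F₁(b−a, b, −z). -/

import Mathlib

/-!
Multiply the exponential series by the series of ₁F₁(b − a, b, −z). Both converge absolutely
(₁F₁(a, b, ·) is `Γ b` times the entire regularized hypergeometric function), so their product
is their Cauchy product. After clearing `n! (b)ₙ`, equality of the coefficients of `zⁿ` reads
`(a)ₙ = ∑ᵢ C(n, i) (-1)ⁱ (b - a)ᵢ (b + i)ₙ₋ᵢ`. Since `(-1)ⁱ (b - a)ᵢ` is the falling factorial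
of `a - b` of length `i`, `(b + i)ₙ₋ᵢ` that of `b + n - 1` of length `n - i`, and `(a)ₙ` that of
`a + n - 1 = (a - b) + (b + n - 1)` of length `n`, this is the Chu–Vandermonde identity.
-/

open Finset

/-- Kummer's confluent hypergeometric function of the first kind,
defined by its everywhere-convergent power series. -/
noncomputable def kummerM (a b z : ℂ) : ℂ :=
  ∑' n : ℕ, ((∏ i ∈ Finset.range n, (a + (i : ℂ))) /
      ((∏ i ∈ Finset.range n, (b + (i : ℂ))) * (n.factorial : ℂ))) * z ^ n

theorem ascPochhammer_eval_eq_prod_range {R : Type*} [CommSemiring R] (n : ℕ) (r : R) :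
    (ascPochhammer R n).eval r = ∏ i ∈ range n, (r + i) := by
  induction n with
  | zero => simp
  | succ n ih => rw [ascPochhammer_succ_eval, ih, prod_range_succ]

theorem ascPochhammer_eval_add {R : Type*} [CommSemiring R] (m n : ℕ) (r : R) :
    (ascPochhammer R (m + n)).eval r =
      (ascPochhammer R m).eval r * (ascPochhammer R n).eval (r + m) := by
  simp only [ascPochhammer_eval_eq_prod_range, prod_range_add, Nat.cast_add, add_assoc]

theorem ascPochhammer_eval_ne_zero {b : ℂ} (hb : ∀ k : ℕ, b ≠ -k) (n : ℕ) :
    (ascPochhammer ℂ n).eval b ≠ 0 := by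
  rw [ne_eq, ascPochhammer_eval_eq_zero_iff]
  rintro ⟨k, -, hk⟩
  exact hb k (neg_eq_iff_eq_neg.mp hk.symm)

theorem ascPochhammer_eval_eq_sum_antidiagonal {R : Type*} [CommRing R] (a b : R) (n : ℕ) :
    (ascPochhammer R n).eval a = ∑ ij ∈ antidiagonal n, (n.choose ij.1 : R) *
      ((-1) ^ ij.1 * (ascPochhammer R ij.1).eval (b - a) *
        (ascPochhammer R ij.2).eval (b + ij.1)) := by
  have smeval_eq (k : ℕ) (r : R) :
      (descPochhammer ℤ k).smeval r = (ascPochhammer R k).eval (r - k + 1) := by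
    rw [Polynomial.descPochhammer_smeval_eq_ascPochhammer,
      Polynomial.ascPochhammer_smeval_eq_eval]
  have vandermonde :=
    Ring.descPochhammer_smeval_add (r := a - b) (s := b + n - 1) n (Commute.all _ _)
  simp only [smeval_eq, show a - b + (b + n - 1) - n + 1 = a by ring] at vandermonde
  rw [vandermonde]
  refine sum_congr rfl fun ⟨i, j⟩ hij => ?_
  rw [HasAntidiagonal.mem_antidiagonal] at hij
  subst hij
  have reflect : (ascPochhammer R i).eval (a - b - i + 1) =
      (-1) ^ i * (ascPochhammer R i).eval (b - a) := by
    rw [← descPochhammer_eval_eq_ascPochhammer, show b - a = -(a - b) by ring,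
      ascPochhammer_eval_neg_eq_descPochhammer, ← mul_assoc, ← mul_pow]
    simp
  rw [reflect, show b + ((i + j : ℕ) : R) - 1 - j + 1 = b + i by push_cast; ring, mul_assoc]

noncomputable def kummerCoeff (a b : ℂ) (n : ℕ) : ℂ :=
  (ascPochhammer ℂ n).eval a / ((ascPochhammer ℂ n).eval b * n.factorial)

theorem kummerM_eq_tsum_kummerCoeff (a b z : ℂ) :
    kummerM a b z = ∑' n, kummerCoeff a b n * z ^ n := by
  simp only [kummerM, kummerCoeff, ascPochhammer_eval_eq_prod_range]

theorem kummerCoeff_eq_Gamma_mul_regularizedHGFunCoeff (a : ℂ) {b : ℂ} (hb : ∀ k : ℕ, b ≠ -k)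
    (n : ℕ) : kummerCoeff a b n = Complex.Gamma b * Complex.regularizedHGFunCoeff {a} {b} n := by
  have hGamma := Complex.Gamma_ne_zero hb
  rw [kummerCoeff, Complex.regularizedHGFunCoeff, ← Complex.Gamma_add_nat_div_Gamma_eq b hb]
  simp only [Multiset.map_singleton, Multiset.prod_singleton]
  field_simp

theorem summable_norm_kummerCoeff_mul_pow (a : ℂ) {b : ℂ} (hb : ∀ k : ℕ, b ≠ -k) (z : ℂ) :
    Summable fun n => ‖kummerCoeff a b n * z ^ n‖ := by
  have h := (Complex.regularizedHGFunSeries {a} {b}).summable_norm_apply (x := z)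
    (by simp [Complex.radius_regularizedHGFunSeries_eq_top])
  simp only [Complex.regularizedHGFunSeries, FormalMultilinearSeries.ofScalars_apply_eq,
    smul_eq_mul] at h
  simpa only [kummerCoeff_eq_Gamma_mul_regularizedHGFunCoeff a hb, mul_assoc, norm_mul]
    using h.mul_left ‖Complex.Gamma b‖

theorem sum_antidiagonal_inv_factorial_mul_kummerCoeff (a : ℂ) {b : ℂ} (hb : ∀ k : ℕ, b ≠ -k)
    (n : ℕ) : ∑ kj ∈ antidiagonal n,
      (kj.1.factorial : ℂ)⁻¹ * ((-1) ^ kj.2 * kummerCoeff (b - a) b kj.2) = kummerCoeff a b n := by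
  rw [← Nat.sum_antidiagonal_swap, kummerCoeff, ascPochhammer_eval_eq_sum_antidiagonal a b n,
    sum_div]
  refine sum_congr rfl fun ⟨i, j⟩ hij => ?_
  rw [HasAntidiagonal.mem_antidiagonal] at hij
  subst hij
  have hb' := ascPochhammer_eval_ne_zero hb (i + j)
  rw [ascPochhammer_eval_add] at hb' ⊢
  obtain ⟨hbi, hbj⟩ := mul_ne_zero_iff.mp hb'
  have hchoose : ((i + j).choose j : ℂ) ≠ 0 :=
    Nat.cast_ne_zero.mpr (Nat.choose_pos (by omega)).ne'
  rw [Prod.fst_swap, Prod.snd_swap, kummerCoeff, ← Nat.add_choose_mul_factorial_mul_factorial,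
    Nat.choose_symm_add]
  push_cast
  field_simp

/-- Kummer transformation: ₁F₁(a,b,z) = e^z · ₁F₁(b−a,b,−z) for b not a nonpositive integer. -/
theorem kummer_transformation (a b z : ℂ) (hb : ∀ k : ℕ, b ≠ -(k : ℂ)) :
    kummerM a b z = Complex.exp z * kummerM (b - a) b (-z) := by
  rw [kummerM_eq_tsum_kummerCoeff, kummerM_eq_tsum_kummerCoeff, Complex.exp_eq_exp_ℂ,
    NormedSpace.exp_eq_tsum_div, tsum_mul_tsum_eq_tsum_sum_antidiagonal_of_summable_norm
      (NormedSpace.norm_expSeries_div_summable z) (summable_norm_kummerCoeff_mul_pow _ hb (-z))]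
  refine tsum_congr fun n => ?_
  rw [← sum_antidiagonal_inv_factorial_mul_kummerCoeff a hb, sum_mul]
  refine sum_congr rfl fun ⟨k, j⟩ hkj => ?_
  rw [← HasAntidiagonal.mem_antidiagonal.mp hkj, pow_add, neg_pow]
  ring
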